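/- Let s be a list of natural numbers with C(s) = 1 that is not a well-formed expression. Then s can be written as s = u ++ v where u is a nonempty concatenation of well-formed expressions, v is nonempty, C(v) ≤ 0, and no nonempty prefix of v is a well-formed expression; moreover the list v ++ u is a well-formed expression. -/

import Mathlib

/-!
The values of `C` on the prefixes of a list form a walk with upward steps of size at most one,
and a list is well formed exactly when this walk first reaches level `1` at its end; likewise a
concatenation of `k` well-formed expressions is a first passage to level `k`. Strip well-formed
prefixes from `s` greedily, leaving `s = u ++ v` with `u` made of `k` expressions and no
well-formed prefix in `v`. As the walk cannot jump over level `1`, no prefix of `v` reaches it,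
so `C v ≤ 0` and `k = 1 - C v ≥ 1`, with `k = 1` forcing `v = []` and `s` well formed. In
`v ++ u` the walk stays `≤ 0` along `v` and then rises by exactly `k`, first reaching `1` at the
end.
-/

/-- `C v` is the length of `v` minus the sum of its entries. -/
def C (v : List ℕ) : ℤ := (v.length : ℤ) - (v.sum : ℤ)

/-- A list of natural numbers is a well-formed expression (Polish notation
encoding of an ordered rooted tree by outdegrees) if it is of the form
`d :: (w₁ ++ ⋯ ++ w_d)` where each `wᵢ` is a well-formed expression. -/
inductive IsWF : List ℕ → Prop
  | node (d : ℕ) (ws : List (List ℕ)) (hlen : ws.length = d)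
      (h : ∀ w ∈ ws, IsWF w) : IsWF (d :: ws.flatten)

/-- The `k`-rotation of `s = u ++ v` with `v` of length `k` is `v ++ u`. -/
def krot (k : ℕ) (s : List ℕ) : List ℕ :=
  s.drop (s.length - k) ++ s.take (s.length - k)

theorem List.prefix_append_iff {α : Type*} {l₁ l₂ q : List α} :
    q <+: l₁ ++ l₂ ↔ q <+: l₁ ∨ ∃ r, q = l₁ ++ r ∧ r <+: l₂ := by
  induction l₁ generalizing q with
  | nil => simp +contextual
  | cons a l₁ ih =>
    rw [List.cons_append, List.prefix_cons_iff, List.prefix_cons_iff]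
    constructor
    · rintro (rfl | ⟨t, rfl, ht⟩)
      · exact .inl (.inl rfl)
      · rcases ih.mp ht with ht | ⟨r, rfl, hr⟩
        · exact .inl (.inr ⟨t, rfl, ht⟩)
        · exact .inr ⟨r, rfl, hr⟩
    · rintro ((rfl | ⟨t, rfl, ht⟩) | ⟨r, rfl, hr⟩)
      · exact .inl rfl
      · exact .inr ⟨t, rfl, ih.mpr (.inl ht)⟩
      · exact .inr ⟨l₁ ++ r, rfl, ih.mpr (.inr ⟨r, rfl, hr⟩)⟩

@[simp] lemma C_nil : C [] = 0 := rfl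

@[simp] lemma C_cons (a : ℕ) (t : List ℕ) : C (a :: t) = 1 - a + C t := by
  simp only [C, List.length_cons, List.sum_cons]; push_cast; ring

@[simp] lemma C_append (v u : List ℕ) : C (v ++ u) = C v + C u := by
  simp only [C, List.length_append, List.sum_append]; push_cast; ring

/-- Along the prefixes of a list, `C` is a walk whose steps `1 - aᵢ` are at most `1`;
`IsFirstPassage k t` says that this walk first reaches level `k` at the end of `t`. -/
def IsFirstPassage (k : ℤ) (t : List ℕ) : Prop :=
  C t = k ∧ ∀ q, q <+: t → q ≠ t → C q < k

lemma isFirstPassage_nil : IsFirstPassage 0 [] :=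
  ⟨rfl, fun _ hq hne => absurd (List.prefix_nil.mp hq) hne⟩

lemma isFirstPassage_cons_iff {m : ℤ} {a : ℕ} {t : List ℕ} :
    IsFirstPassage m (a :: t) ↔ 0 < m ∧ IsFirstPassage (m - 1 + a) t := by
  simp only [IsFirstPassage, List.prefix_cons_iff, C_cons]
  constructor
  · rintro ⟨hC, hq⟩
    refine ⟨by simpa using hq [] (.inl rfl) (by simp), by omega, fun q hq' hne => ?_⟩
    have := hq (a :: q) (.inr ⟨q, rfl, hq'⟩) (by simpa using hne)
    simp only [C_cons] at this
    omega
  · rintro ⟨hm, hC, hq⟩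
    refine ⟨by omega, ?_⟩
    rintro q (rfl | ⟨q, rfl, hq'⟩) hne
    · simpa using hm
    · have := hq q hq' (by simpa using hne)
      simp only [C_cons]
      omega

lemma isFirstPassage_append {k : ℤ} {v u : List ℕ} (hv : ∀ q, q <+: v → q ≠ v → C q < C v + k)
    (hu : IsFirstPassage k u) : IsFirstPassage (C v + k) (v ++ u) := by
  refine ⟨by rw [C_append, hu.1], fun q hq hne => ?_⟩
  rcases List.prefix_append_iff.mp hq with hq | ⟨r, rfl, hr⟩
  · rcases eq_or_ne q v with rfl | hqv
    · exact lt_add_of_pos_right _ (hu.2 [] u.nil_prefix (by simpa using hne))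
    · exact hv q hq hqv
  · rw [C_append]
    exact add_lt_add_right (hu.2 r hr (by simpa using hne)) _

lemma exists_prefix_isFirstPassage {k : ℤ} {t : List ℕ} (hk : 0 ≤ k) (h : k ≤ C t) :
    ∃ p, p <+: t ∧ IsFirstPassage k p := by
  induction t generalizing k with
  | nil => exact ⟨[], List.prefix_rfl, le_antisymm h hk ▸ isFirstPassage_nil⟩
  | cons a t ih =>
    rcases hk.eq_or_lt with rfl | hk
    · exact ⟨[], List.nil_prefix, isFirstPassage_nil⟩
    · obtain ⟨p, hp, hpk⟩ := ih (k := k - 1 + a) (by omega) (by rw [C_cons] at h; omega)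
      exact ⟨a :: p, List.cons_prefix_cons.mpr ⟨rfl, hp⟩, isFirstPassage_cons_iff.mpr ⟨hk, hpk⟩⟩

namespace IsFirstPassage

variable {k m : ℤ} {t : List ℕ}

lemma nonneg (h : IsFirstPassage k t) : 0 ≤ k := by
  rcases eq_or_ne t [] with rfl | ht
  · exact h.1 ▸ le_rfl
  · exact (h.2 [] t.nil_prefix ht.symm).le

lemma eq_nil_of_zero (h : IsFirstPassage 0 t) : t = [] := by
  by_contra ht
  exact (h.2 [] t.nil_prefix (Ne.symm ht)).false

lemma exists_append (h : IsFirstPassage (k + m) t) (hk : 0 ≤ k) (hm : 0 ≤ m) :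
    ∃ p r, t = p ++ r ∧ IsFirstPassage k p ∧ IsFirstPassage m r := by
  obtain ⟨p, ⟨r, rfl⟩, hp⟩ := exists_prefix_isFirstPassage hk (by linarith [h.1])
  refine ⟨p, r, rfl, hp, by linarith [h.1, hp.1, C_append p r], fun q hq hne => ?_⟩
  have := h.2 (p ++ q) ((List.prefix_append_right_inj p).mpr hq) (by simpa using hne)
  rw [C_append, hp.1] at this
  linarith

end IsFirstPassage

lemma isFirstPassage_flatten {ws : List (List ℕ)} (h : ∀ w ∈ ws, IsFirstPassage 1 w) :
    IsFirstPassage ws.length ws.flatten := by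
  induction ws with
  | nil => exact isFirstPassage_nil
  | cons w ws ih =>
    have hw := h w List.mem_cons_self
    have hws := ih fun x hx => h x (List.mem_cons_of_mem _ hx)
    have := isFirstPassage_append (fun q hq hne => by linarith [hw.2 q hq hne, hws.nonneg, hw.1])
      hws
    rwa [hw.1, add_comm, ← Nat.cast_add_one] at this

lemma IsWF.isFirstPassage {w : List ℕ} (h : IsWF w) : IsFirstPassage 1 w := by
  induction h with
  | node d ws hlen _ ih =>
    exact isFirstPassage_cons_iff.mpr ⟨one_pos, by simpa [hlen] using isFirstPassage_flatten ih⟩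

lemma IsFirstPassage.exists_isWF_flatten {k : ℕ} {t : List ℕ} (h : IsFirstPassage k t) :
    ∃ ws : List (List ℕ), ws.length = k ∧ (∀ w ∈ ws, IsWF w) ∧ t = ws.flatten := by
  cases k with
  | zero => exact ⟨[], rfl, by simp, h.eq_nil_of_zero⟩
  | succ k =>
    obtain ⟨_ | ⟨a, p⟩, r, rfl, hp, hr⟩ :=
      exists_append (k := 1) (m := k) (by simpa [add_comm] using h) zero_le_one
        (Nat.cast_nonneg k)
    · exact absurd hp.1 (by simp)
    obtain ⟨ws, hlen, hws, rfl⟩ := (isFirstPassage_cons_iff.mp hp).2.exists_isWF_flatten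
    obtain ⟨ws', hlen', hws', rfl⟩ := hr.exists_isWF_flatten
    refine ⟨(a :: ws.flatten) :: ws', by simp [hlen'], ?_, by simp⟩
    rintro w (_ | ⟨_, hw⟩)
    · exact IsWF.node a ws (by simpa using hlen) hws
    · exact hws' w hw
termination_by t.length
decreasing_by all_goals subst_vars; simp

lemma isWF_iff_isFirstPassage {w : List ℕ} : IsWF w ↔ IsFirstPassage 1 w := by
  refine ⟨IsWF.isFirstPassage, fun h => ?_⟩
  obtain ⟨ws, hlen, hws, rfl⟩ := h.exists_isWF_flatten (k := 1)
  obtain ⟨w, rfl⟩ := List.length_eq_one_iff.mp hlen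
  simpa using hws

lemma exists_isWF_prefix {t : List ℕ} (h : 1 ≤ C t) : ∃ p, p <+: t ∧ IsWF p := by
  obtain ⟨p, hp, hp1⟩ := exists_prefix_isFirstPassage zero_le_one h
  exact ⟨p, hp, isWF_iff_isFirstPassage.mpr hp1⟩

lemma IsWF.ne_nil {w : List ℕ} (h : IsWF w) : w ≠ [] := by
  rintro rfl
  simpa using h.isFirstPassage.1

lemma exists_isWF_flatten_append (t : List ℕ) :
    ∃ (ws : List (List ℕ)) (r : List ℕ), t = ws.flatten ++ r ∧ (∀ w ∈ ws, IsWF w) ∧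
      ∀ p, p <+: r → p ≠ [] → ¬ IsWF p := by
  by_cases h : ∃ w, w <+: t ∧ IsWF w
  · obtain ⟨w, ⟨t', rfl⟩, hw⟩ := h
    have hw_ne := hw.ne_nil
    obtain ⟨ws, r, rfl, hws, hr⟩ := exists_isWF_flatten_append t'
    refine ⟨w :: ws, r, by simp, ?_, hr⟩
    rintro x (_ | ⟨_, hx⟩)
    · exact hw
    · exact hws x hx
  · push Not at h
    exact ⟨[], t, rfl, by simp, fun p hp _ => h p hp⟩
termination_by t.length
decreasing_by subst_vars; simp [List.length_pos_iff.mpr hw_ne]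

theorem stmt_7 (s : List ℕ) (hC : C s = 1) (hs : ¬ IsWF s) :
    ∃ u v : List ℕ, s = u ++ v ∧
      (∃ ws : List (List ℕ), ws ≠ [] ∧ (∀ w ∈ ws, IsWF w) ∧ u = ws.flatten) ∧
      v ≠ [] ∧ C v ≤ 0 ∧
      (∀ p : List ℕ, p <+: v → p ≠ [] → ¬ IsWF p) ∧
      IsWF (v ++ u) := by
  obtain ⟨ws, v, rfl, hws, hv⟩ := exists_isWF_flatten_append s
  have hvC : ∀ p, p <+: v → C p ≤ 0 := fun p hp => by
    by_contra! hpC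
    obtain ⟨q, hq, hqwf⟩ := exists_isWF_prefix hpC
    exact hv q (hq.trans hp) hqwf.ne_nil hqwf
  have hu := isFirstPassage_flatten fun w hw => (hws w hw).isFirstPassage
  rw [C_append, hu.1] at hC
  have hwsne : ws ≠ [] := by
    rintro rfl
    simp only [List.length_nil, Nat.cast_zero, zero_add] at hC
    linarith [hvC v List.prefix_rfl]
  have hvne : v ≠ [] := by
    rintro rfl
    obtain ⟨w, rfl⟩ := List.length_eq_one_iff.mp (by simpa using hC)
    exact hs (by simpa using hws w (by simp))
  refine ⟨ws.flatten, v, rfl, ⟨ws, hwsne, hws, rfl⟩, hvne, hvC v List.prefix_rfl, hv, ?_⟩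
  rw [isWF_iff_isFirstPassage, ← hC, add_comm]
  exact isFirstPassage_append (fun q hq _ => by linarith [hvC q hq]) hu
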